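/- In the non-Markovian linear Gaussian model with backward dual process y_t = ∑_{s=1}^{min(τ,T-t)} A_{t+s,s}ᵀ y_{t+s} + Cᵀ u_t, y_T = f, the following algebraic pairing identity holds pathwise: fᵀ X_T - μ_0ᵀ y_0 + ∑_{t=1}^T u_{t-1}ᵀ Z_t = y_0ᵀ(X_0 - μ_0) + ∑_{t=1}^T y_tᵀ B_t + ∑_{t=0}^{T-1} u_tᵀ W_{t+1}, where X_{t+1} = ∑_{s=1}^{min(τ,t+1)} A_{t+1,s} X_{t+1-s} + B_{t+1} and Z_{t+1} = C X_t + W_{t+1}. -/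
import Mathlib


open Finset Matrix

lemma pairing_swap_aux (T τ : ℕ) (F : ℕ → ℕ → ℝ) :
    ∑ t ∈ range T, ∑ s ∈ Icc 1 (min τ (T-t)), F (t+s) s
      = ∑ t ∈ range T, ∑ s ∈ Icc 1 (min τ (t+1)), F (t+1) s := by
  rw [Finset.sum_sigma', Finset.sum_sigma']
  refine Finset.sum_nbij' (i := fun p => (⟨p.1 + p.2 - 1, p.2⟩ : Σ _ : ℕ, ℕ))
    (j := fun p => (⟨p.1 + 1 - p.2, p.2⟩ : Σ _ : ℕ, ℕ)) ?_ ?_ ?_ ?_ ?_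
  · rintro ⟨t, s⟩ h
    simp only [Finset.mem_sigma, Finset.mem_range, Finset.mem_Icc, le_min_iff] at h ⊢
    omega
  · rintro ⟨t, s⟩ h
    simp only [Finset.mem_sigma, Finset.mem_range, Finset.mem_Icc, le_min_iff] at h ⊢
    omega
  · rintro ⟨t, s⟩ h
    simp only [Finset.mem_sigma, Finset.mem_range, Finset.mem_Icc, le_min_iff] at h
    have : t + s - 1 + 1 - s = t := by omega
    simp [this]
  · rintro ⟨t, s⟩ h
    simp only [Finset.mem_sigma, Finset.mem_range, Finset.mem_Icc, le_min_iff] at h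
    have : t + 1 - s + s - 1 = t := by omega
    simp [this]
  · rintro ⟨t, s⟩ h
    simp only [Finset.mem_sigma, Finset.mem_range, Finset.mem_Icc, le_min_iff] at h
    have h1 : t + s - 1 + 1 = t + s := by omega
    simp [h1]

lemma dp_sum_right {d : Type*} [Fintype d] (v : d → ℝ) (s : Finset ℕ) (g : ℕ → d → ℝ) :
    v ⬝ᵥ (∑ i ∈ s, g i) = ∑ i ∈ s, v ⬝ᵥ g i := by
  simp only [dotProduct, Finset.sum_apply, Finset.mul_sum]
  exact Finset.sum_comm

lemma dp_sum_left {d : Type*} [Fintype d] (v : d → ℝ) (s : Finset ℕ) (g : ℕ → d → ℝ) :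
    (∑ i ∈ s, g i) ⬝ᵥ v = ∑ i ∈ s, g i ⬝ᵥ v := by
  simp only [dotProduct, Finset.sum_apply, Finset.sum_mul]
  exact Finset.sum_comm

/-- the pathwise pairing identity for the non-Markovian linear
Gaussian model and its backward dual process. -/
theorem pairing_identity (d m T τ : ℕ)
    (A : ℕ → ℕ → Matrix (Fin d) (Fin d) ℝ) (C : Matrix (Fin m) (Fin d) ℝ)
    (μ0 f : Fin d → ℝ)
    (X B : ℕ → Fin d → ℝ) (Z W : ℕ → Fin m → ℝ)
    (u : ℕ → Fin m → ℝ) (y : ℕ → Fin d → ℝ)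
    -- state dynamics
    (hX : ∀ t < T, X (t + 1) =
      (∑ s ∈ Icc 1 (min τ (t + 1)), (A (t + 1) s).mulVec (X (t + 1 - s))) + B (t + 1))
    -- observation model
    (hZ : ∀ t ≤ T, Z (t + 1) = C.mulVec (X t) + W (t + 1))
    -- backward dual dynamics
    (hyT : y T = f)
    (hy : ∀ t < T, y t =
      (∑ s ∈ Icc 1 (min τ (T - t)), (A (t + s) s)ᵀ.mulVec (y (t + s))) + Cᵀ.mulVec (u t)) :
    f ⬝ᵥ X T - μ0 ⬝ᵥ y 0 + ∑ t ∈ range T, u t ⬝ᵥ Z (t + 1) =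
      y 0 ⬝ᵥ (X 0 - μ0) + (∑ t ∈ range T, y (t + 1) ⬝ᵥ B (t + 1)) +
        ∑ t ∈ range T, u t ⬝ᵥ W (t + 1) := by
  have key : f ⬝ᵥ X T - y 0 ⬝ᵥ X 0
      = ∑ t ∈ range T, (y (t+1) ⬝ᵥ X (t+1) - y t ⬝ᵥ X t) := by
    rw [Finset.sum_range_sub (f := fun t => y t ⬝ᵥ X t), hyT]
  have expand : ∀ t ∈ range T, y (t+1) ⬝ᵥ X (t+1) - y t ⬝ᵥ X t =
      ((∑ s ∈ Icc 1 (min τ (t+1)), y (t+1) ⬝ᵥ (A (t+1) s).mulVec (X (t+1-s)))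
        + y (t+1) ⬝ᵥ B (t+1))
      - ((∑ s ∈ Icc 1 (min τ (T-t)), y (t+s) ⬝ᵥ (A (t+s) s).mulVec (X (t+s-s)))
        + u t ⬝ᵥ C.mulVec (X t)) := by
    intro t ht
    rw [Finset.mem_range] at ht
    nth_rewrite 1 [hX t ht]
    nth_rewrite 1 [hy t ht]
    rw [dotProduct_add, dp_sum_right, add_dotProduct, dp_sum_left]
    congr 2
    · exact Finset.sum_congr rfl fun s _ => by
        rw [mulVec_transpose, ← dotProduct_mulVec, Nat.add_sub_cancel]
    · rw [mulVec_transpose, ← dotProduct_mulVec]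
  have swap := pairing_swap_aux T τ (fun r s => y r ⬝ᵥ (A r s).mulVec (X (r - s)))
  have hZ' : ∀ t ∈ range T, u t ⬝ᵥ Z (t+1) = u t ⬝ᵥ C.mulVec (X t) + u t ⬝ᵥ W (t+1) := by
    intro t ht
    rw [Finset.mem_range] at ht
    rw [hZ t ht.le, dotProduct_add]
  rw [Finset.sum_congr rfl expand] at key
  rw [Finset.sum_congr rfl hZ']
  simp only [Finset.sum_sub_distrib, Finset.sum_add_distrib] at key ⊢
  simp only [Nat.add_sub_cancel] at key swap
  rw [swap] at key
  have hcomm : μ0 ⬝ᵥ y 0 = y 0 ⬝ᵥ μ0 := dotProduct_comm _ _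
  rw [dotProduct_sub, hcomm]
  linarith [key]
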